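/- arXiv:1602.07682 — 5 statements merged into one kernel-verified Lean document; each statement's English description precedes it below -/
import Mathlib

section
/- Suppose the series Σ_{n=2}^∞ |aₙ| r^{μn} converges for every 0 ≤ r < 1 and that Σ_{n=2}^∞ Ξ(n)·|aₙ| ≤ (A−B)(1−γ). Then F_μ belongs to the class E_{k,m}(Φ_μ,Ψ_μ,A,B,μ,γ); that is, the series defining F_μ, G and H converge absolutely at every z ∈ 𝕌 and, for every z ∈ 𝕌 with z ≠ 0, |G(z) − H(z)| < |(A−B)(1−γ)·H(z) − B·(G(z) − H(z))|. -/
open Complex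

/-- `Ξ(n) = (1−B)((μn)^k ϑₙ − (μn)^m λₙ) + (A−B)(1−γ)(μn)^m λₙ`. -/
noncomputable def Xi (μ A B γ : ℝ) (k m : ℕ) (ϑ lam : ℕ → ℝ) (n : ℕ) : ℝ :=
  (1 - B) * ((μ * n) ^ k * ϑ n - (μ * n) ^ m * lam n) +
    (A - B) * (1 - γ) * ((μ * n) ^ m * lam n)

/-- The term of the series `G(z) = z + Σ (μn)^k ϑₙ aₙ z^{μn}`
(representing `D_μ^k(F_μ∗Φ_μ)(z)`); with `c n` a general complex coefficient,
`pser μ c z = z + Σ_{n≥2} cₙ z^{μn}` where `z^{μn}` is the principal power. -/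
noncomputable def pser (μ : ℝ) (c : ℕ → ℂ) (z : ℂ) : ℂ :=
  z + ∑' n : ℕ, c (n + 2) * z ^ ((μ * (n + 2 : ℕ) : ℝ) : ℂ)

/-! With `C = (A − B)(1 − γ)`, `tₙ = (μn)^k ϑₙ` and `sₙ = (μn)^m λₙ` one has
`G − H = Σ (tₙ − sₙ) aₙ z^{μn}` and `C·H − B(G − H) = C z + Σ (C sₙ − B(tₙ − sₙ)) aₙ z^{μn}`.
Both coefficient sequences are nonnegative (since `sₙ ≤ tₙ` and `B < 0`) and add up to `Ξ(n)`,
so by the triangle inequality it suffices that `Σ Ξ(n) |aₙ| r^{μn} < C r` for `r = |z|`; this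
holds because `r^{μn} ≤ r^{2μ} < r` for `n ≥ 2` and `μ ≥ 1`. -/

theorem norm_tsum_smul_lt_norm_add_tsum_smul {E : Type*} [SeminormedAddCommGroup E]
    [NormedSpace ℝ E] {x y : ℕ → ℝ} (hx : ∀ n, 0 ≤ x n) (hy : ∀ n, 0 ≤ y n) {b : ℕ → E}
    (ζ : E) (hs : Summable fun n => (x n + y n) * ‖b n‖)
    (hlt : ∑' n, (x n + y n) * ‖b n‖ < ‖ζ‖) :
    ‖∑' n, x n • b n‖ < ‖ζ + ∑' n, y n • b n‖ := by
  have hxs : Summable fun n => x n * ‖b n‖ :=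
    hs.of_nonneg_of_le (fun n => mul_nonneg (hx n) (norm_nonneg _))
      fun n => mul_le_mul_of_nonneg_right (le_add_of_nonneg_right (hy n)) (norm_nonneg _)
  have hys : Summable fun n => y n * ‖b n‖ :=
    hs.of_nonneg_of_le (fun n => mul_nonneg (hy n) (norm_nonneg _))
      fun n => mul_le_mul_of_nonneg_right (le_add_of_nonneg_left (hx n)) (norm_nonneg _)
  have hX : ‖∑' n, x n • b n‖ ≤ ∑' n, x n * ‖b n‖ :=
    tsum_of_norm_bounded hxs.hasSum fun n => by rw [norm_smul, Real.norm_of_nonneg (hx n)]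
  have hY : ‖∑' n, y n • b n‖ ≤ ∑' n, y n * ‖b n‖ :=
    tsum_of_norm_bounded hys.hasSum fun n => by rw [norm_smul, Real.norm_of_nonneg (hy n)]
  have hsplit : ∑' n, (x n + y n) * ‖b n‖ = ∑' n, x n * ‖b n‖ + ∑' n, y n * ‖b n‖ := by
    rw [← hxs.tsum_add hys]
    simp only [add_mul]
  have htri : ‖ζ‖ ≤ ‖ζ + ∑' n, y n • b n‖ + ‖∑' n, y n • b n‖ := by
    simpa using norm_sub_le (ζ + ∑' n, y n • b n) (∑' n, y n • b n)
  linarith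

theorem tsum_mul_rpow_lt {c : ℕ → ℝ} (hc : ∀ n, 0 ≤ c n) (hs : Summable c) {C : ℝ}
    (hC : 0 < C) (hle : ∑' n, c n ≤ C) {μ r : ℝ} (hμ : 1 ≤ μ) (hr0 : 0 < r) (hr1 : r < 1) :
    (Summable fun n : ℕ => c n * r ^ (μ * (n + 2 : ℕ))) ∧
      ∑' n : ℕ, c n * r ^ (μ * (n + 2 : ℕ)) < C * r := by
  have hdom : ∀ n : ℕ, c n * r ^ (μ * (n + 2 : ℕ)) ≤ c n * r ^ (2 * μ) := fun n =>
    mul_le_mul_of_nonneg_left (Real.rpow_le_rpow_of_exponent_ge hr0 hr1.le (by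
      push_cast; nlinarith [n.cast_nonneg (α := ℝ)])) (hc n)
  have hsr : Summable fun n : ℕ => c n * r ^ (μ * (n + 2 : ℕ)) :=
    (hs.mul_right _).of_nonneg_of_le (fun n => mul_nonneg (hc n) (Real.rpow_nonneg hr0.le _)) hdom
  refine ⟨hsr, ?_⟩
  have hr2μ : r ^ (2 * μ) < r := by
    simpa using Real.rpow_lt_rpow_of_exponent_gt hr0 hr1 (by linarith : (1 : ℝ) < 2 * μ)
  calc ∑' n : ℕ, c n * r ^ (μ * (n + 2 : ℕ))
      ≤ (∑' n, c n) * r ^ (2 * μ) := by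
        rw [← tsum_mul_right]; exact hsr.tsum_le_tsum hdom (hs.mul_right _)
    _ ≤ C * r ^ (2 * μ) := by gcongr
    _ < C * r := mul_lt_mul_of_pos_left hr2μ hC

theorem summable_norm_ofReal_mul_mul_cpow {x : ℕ → ℝ} (hx : ∀ n, 0 ≤ x n) {a : ℕ → ℂ}
    (hs : Summable fun n => x n * ‖a n‖) {μ : ℝ} (hμ : 0 ≤ μ) {z : ℂ} (hz : ‖z‖ ≤ 1) :
    Summable fun n => ‖(x n : ℂ) * a n * z ^ ((μ * (n + 2 : ℕ) : ℝ) : ℂ)‖ := by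
  refine hs.of_nonneg_of_le (fun n => norm_nonneg _) fun n => ?_
  rw [norm_mul, norm_mul, norm_real, Real.norm_of_nonneg (hx n), norm_cpow_real]
  exact mul_le_of_le_one_right (mul_nonneg (hx n) (norm_nonneg _))
    (Real.rpow_le_one (norm_nonneg _) hz (mul_nonneg hμ (Nat.cast_nonneg _)))

theorem pow_mul_le_pow_mul {t u v : ℝ} {m k : ℕ} (ht : 1 ≤ t) (hmk : m ≤ k) (hu : 0 ≤ u)
    (huv : u ≤ v) : t ^ m * u ≤ t ^ k * v :=
  mul_le_mul (pow_le_pow_right₀ ht hmk) huv hu (by positivity)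

theorem summable_mul_of_summable_weight {tk tm : ℕ → ℝ} (htm : ∀ n, 0 ≤ tm n)
    (htmk : ∀ n, tm n ≤ tk n) {B C : ℝ} (hB : B < 0) (hC : 0 < C) {f : ℕ → ℝ} (hf : ∀ n, 0 ≤ f n)
    (hs : Summable fun n => ((1 - B) * (tk n - tm n) + C * tm n) * f n) :
    (Summable fun n => tk n * f n) ∧ Summable fun n => tm n * f n := by
  have hle : ∀ n, tk n ≤ (1 + C⁻¹) * ((1 - B) * (tk n - tm n) + C * tm n) := fun n => by
    have hdiff : tk n - tm n ≤ (1 - B) * (tk n - tm n) + C * tm n := by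
      nlinarith [htmk n, htm n, mul_nonneg hC.le (htm n)]
    have hm : tm n ≤ C⁻¹ * ((1 - B) * (tk n - tm n) + C * tm n) :=
      (le_inv_mul_iff₀ hC).2 (by nlinarith [htmk n])
    linarith [add_mul 1 C⁻¹ ((1 - B) * (tk n - tm n) + C * tm n)]
  have hk : Summable fun n => tk n * f n :=
    (hs.mul_left (1 + C⁻¹)).of_nonneg_of_le
      (fun n => mul_nonneg ((htm n).trans (htmk n)) (hf n))
      fun n => by rw [← mul_assoc]; exact mul_le_mul_of_nonneg_right (hle n) (hf n)
  exact ⟨hk, hk.of_nonneg_of_le (fun n => mul_nonneg (htm n) (hf n))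
    fun n => mul_le_mul_of_nonneg_right (htmk n) (hf n)⟩

theorem norm_tsum_sub_lt {tk tm : ℕ → ℝ} (htm : ∀ n, 0 ≤ tm n) (htmk : ∀ n, tm n ≤ tk n)
    {B C : ℝ} (hB : B < 0) (hC : 0 ≤ C) {b : ℕ → ℂ} (hk : Summable fun n => (tk n : ℂ) * b n)
    (hm : Summable fun n => (tm n : ℂ) * b n) (ζ : ℂ)
    (hs : Summable fun n => ((1 - B) * (tk n - tm n) + C * tm n) * ‖b n‖)
    (hlt : ∑' n, ((1 - B) * (tk n - tm n) + C * tm n) * ‖b n‖ < ‖ζ‖) :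
    ‖∑' n, (tk n : ℂ) * b n - ∑' n, (tm n : ℂ) * b n‖ <
      ‖ζ + ((C : ℂ) * ∑' n, (tm n : ℂ) * b n -
        B * (∑' n, (tk n : ℂ) * b n - ∑' n, (tm n : ℂ) * b n))‖ := by
  have hdiff : ∀ n, (tk n - tm n) • b n = (tk n : ℂ) * b n - (tm n : ℂ) * b n := fun n => by
    rw [real_smul, ofReal_sub, sub_mul]
  have hsub : ∑' n, (tk n : ℂ) * b n - ∑' n, (tm n : ℂ) * b n =
      ∑' n, (tk n - tm n) • b n := by
    rw [← hk.tsum_sub hm]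
    simp only [hdiff]
  have hcomb : (C : ℂ) * ∑' n, (tm n : ℂ) * b n -
      B * (∑' n, (tk n : ℂ) * b n - ∑' n, (tm n : ℂ) * b n) =
      ∑' n, (C * tm n - B * (tk n - tm n)) • b n := by
    rw [hsub, ← tsum_mul_left, ← tsum_mul_left,
      ← (hm.mul_left _).tsum_sub (((hk.sub hm).congr fun n => (hdiff n).symm).mul_left _)]
    refine tsum_congr fun n => ?_
    simp only [real_smul]
    push_cast
    ring
  rw [hcomb, hsub]
  refine norm_tsum_smul_lt_norm_add_tsum_smul (fun n => sub_nonneg.2 (htmk n)) (fun n => ?_) ζ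
    (hs.congr fun n => by ring) (by convert hlt using 3; ring)
  nlinarith [htmk n, mul_nonneg hC (htm n)]

theorem norm_pser_sub_lt {tk tm : ℕ → ℝ} (htm : ∀ n, 0 ≤ tm n) (htmk : ∀ n, tm n ≤ tk n)
    {B C : ℝ} (hB : B < 0) (hC : 0 < C) {a : ℕ → ℂ}
    (hs : Summable fun n => ((1 - B) * (tk n - tm n) + C * tm n) * ‖a n‖)
    (hle : ∑' n, ((1 - B) * (tk n - tm n) + C * tm n) * ‖a n‖ ≤ C)
    {μ : ℝ} (hμ : 1 ≤ μ) {z : ℂ} (hz : ‖z‖ < 1) (hz0 : z ≠ 0) :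
    ‖(z + ∑' n, (tk n : ℂ) * a n * z ^ ((μ * (n + 2 : ℕ) : ℝ) : ℂ)) -
        (z + ∑' n, (tm n : ℂ) * a n * z ^ ((μ * (n + 2 : ℕ) : ℝ) : ℂ))‖ <
      ‖(C : ℂ) * (z + ∑' n, (tm n : ℂ) * a n * z ^ ((μ * (n + 2 : ℕ) : ℝ) : ℂ)) -
        B * ((z + ∑' n, (tk n : ℂ) * a n * z ^ ((μ * (n + 2 : ℕ) : ℝ) : ℂ)) -
          (z + ∑' n, (tm n : ℂ) * a n * z ^ ((μ * (n + 2 : ℕ) : ℝ) : ℂ)))‖ := by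
  obtain ⟨hk, hm⟩ := summable_mul_of_summable_weight htm htmk hB hC (fun n => norm_nonneg _) hs
  have hk' := (summable_norm_ofReal_mul_mul_cpow (fun n => (htm n).trans (htmk n)) hk
    (zero_le_one.trans hμ) hz.le).of_norm
  have hm' := (summable_norm_ofReal_mul_mul_cpow htm hm (zero_le_one.trans hμ) hz.le).of_norm
  have hΞ : ∀ n, 0 ≤ (1 - B) * (tk n - tm n) + C * tm n := fun n => by
    nlinarith [htmk n, mul_nonneg hC.le (htm n)]
  obtain ⟨hsr, hlt⟩ := tsum_mul_rpow_lt (fun n => mul_nonneg (hΞ n) (norm_nonneg _)) hs hC hle hμ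
    (norm_pos_iff.2 hz0) hz
  have hnorm : ∀ n, ((1 - B) * (tk n - tm n) + C * tm n) * ‖a n‖ * ‖z‖ ^ (μ * (n + 2 : ℕ)) =
      ((1 - B) * (tk n - tm n) + C * tm n) * ‖a n * z ^ ((μ * (n + 2 : ℕ) : ℝ) : ℂ)‖ := fun n => by
    rw [norm_mul, norm_cpow_real, mul_assoc]
  simp only [mul_assoc] at hk' hm' ⊢
  rw [add_sub_add_left_eq_sub, mul_add, add_sub_assoc]
  refine norm_tsum_sub_lt htm htmk hB hC.le hk' hm' _ (hsr.congr hnorm) ?_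
  rwa [norm_mul, norm_real, Real.norm_of_nonneg hC.le, ← tsum_congr hnorm]

theorem stmt0_general (μ A B γ : ℝ) (k m : ℕ) (a : ℕ → ℂ) (ϑ lam : ℕ → ℝ)
    (hμ : 1 ≤ μ) (hkm : m ≤ k)
    (hBA : B < A) (hB0 : B < 0)
    (hγ1 : γ < 1)
    (hlam : ∀ n, 2 ≤ n → 0 ≤ lam n) (hϑ : ∀ n, 2 ≤ n → lam n ≤ ϑ n)
    (hconv : ∀ r : ℝ, 0 ≤ r → r < 1 →
      Summable fun n : ℕ => ‖(a (n + 2))‖ * r ^ (μ * (n + 2 : ℕ) : ℝ))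
    (hsum : Summable fun n : ℕ =>
      Xi μ A B γ k m ϑ lam (n + 2) * ‖(a (n + 2))‖)
    (hle : (∑' n : ℕ, Xi μ A B γ k m ϑ lam (n + 2) * ‖(a (n + 2))‖)
      ≤ (A - B) * (1 - γ)) :
    (∀ z : ℂ, ‖z‖ < 1 →
      ((Summable fun n : ℕ =>
        ‖(a (n + 2) * z ^ ((μ * (n + 2 : ℕ) : ℝ) : ℂ))‖) ∧
      (Summable fun n : ℕ =>
        ‖((((μ * (n + 2 : ℕ)) ^ k * ϑ (n + 2) : ℝ) : ℂ) * a (n + 2) *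
          z ^ ((μ * (n + 2 : ℕ) : ℝ) : ℂ))‖) ∧
      (Summable fun n : ℕ =>
        ‖((((μ * (n + 2 : ℕ)) ^ m * lam (n + 2) : ℝ) : ℂ) * a (n + 2) *
          z ^ ((μ * (n + 2 : ℕ) : ℝ) : ℂ))‖))) ∧
    (∀ z : ℂ, ‖z‖ < 1 → z ≠ 0 →
      ‖(pser μ (fun n => (((μ * n) ^ k * ϑ n : ℝ) : ℂ) * a n) z -
          pser μ (fun n => (((μ * n) ^ m * lam n : ℝ) : ℂ) * a n) z)‖ <
      ‖((((A - B) * (1 - γ) : ℝ) : ℂ) *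
            pser μ (fun n => (((μ * n) ^ m * lam n : ℝ) : ℂ) * a n) z -
          ((B : ℝ) : ℂ) *
            (pser μ (fun n => (((μ * n) ^ k * ϑ n : ℝ) : ℂ) * a n) z -
              pser μ (fun n => (((μ * n) ^ m * lam n : ℝ) : ℂ) * a n) z))‖) := by
  have hC : 0 < (A - B) * (1 - γ) := mul_pos (by linarith) (by linarith)
  have hμn : ∀ n : ℕ, 1 ≤ μ * (n + 2 : ℕ) := fun n => by push_cast; nlinarith
  have htm : ∀ n : ℕ, 0 ≤ (μ * (n + 2 : ℕ)) ^ m * lam (n + 2) := fun n =>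
    mul_nonneg (pow_nonneg (zero_le_one.trans (hμn n)) _) (hlam _ (by omega))
  have htmk : ∀ n : ℕ, (μ * (n + 2 : ℕ)) ^ m * lam (n + 2) ≤ (μ * (n + 2 : ℕ)) ^ k * ϑ (n + 2) :=
    fun n => pow_mul_le_pow_mul (hμn n) hkm (hlam _ (by omega)) (hϑ _ (by omega))
  obtain ⟨hk, hm⟩ := summable_mul_of_summable_weight htm htmk hB0 hC
    (fun n => norm_nonneg (a (n + 2))) hsum
  refine ⟨fun z hz => ⟨?_, ?_, ?_⟩, fun z hz hz0 => norm_pser_sub_lt htm htmk hB0 hC hsum hle hμ hz hz0⟩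
  · simpa only [norm_mul, norm_cpow_real] using hconv ‖z‖ (norm_nonneg _) hz
  · exact summable_norm_ofReal_mul_mul_cpow (fun n => (htm n).trans (htmk n)) hk
      (zero_le_one.trans hμ) hz.le
  · exact summable_norm_ofReal_mul_mul_cpow htm hm (zero_le_one.trans hμ) hz.le

/-- Theorem 2.1 of the paper: if `Σ_{n≥2} |aₙ| r^{μn}` converges for all
`0 ≤ r < 1` and `Σ_{n≥2} Ξ(n)|aₙ| ≤ (A−B)(1−γ)`, then `F_μ ∈ E_{k,m}(Φ_μ,Ψ_μ,A,B,μ,γ)`: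
the series for `F_μ`, `G = D_μ^k(F_μ∗Φ_μ)` and `H = D_μ^m(F_μ∗Ψ_μ)` converge absolutely on 𝕌
and `|G(z) − H(z)| < |(A−B)(1−γ)H(z) − B(G(z) − H(z))|` for `z ∈ 𝕌 ∖ {0}`. -/
theorem stmt0 (μ A B γ : ℝ) (k m : ℕ) (a : ℕ → ℂ) (ϑ lam : ℕ → ℝ)
    (hμ : 1 ≤ μ) (hkm : m ≤ k)
    (hB : -1 ≤ B) (hBA : B < A) (hA : A ≤ 1) (hB0 : B < 0)
    (hγ0 : 0 ≤ γ) (hγ1 : γ < 1)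
    (hlam : ∀ n, 2 ≤ n → 0 ≤ lam n) (hϑ : ∀ n, 2 ≤ n → lam n ≤ ϑ n)
    (hconv : ∀ r : ℝ, 0 ≤ r → r < 1 →
      Summable fun n : ℕ => ‖(a (n + 2))‖ * r ^ (μ * (n + 2 : ℕ) : ℝ))
    (hsum : Summable fun n : ℕ =>
      Xi μ A B γ k m ϑ lam (n + 2) * ‖(a (n + 2))‖)
    (hle : (∑' n : ℕ, Xi μ A B γ k m ϑ lam (n + 2) * ‖(a (n + 2))‖)
      ≤ (A - B) * (1 - γ)) :
    (∀ z : ℂ, ‖z‖ < 1 →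
      ((Summable fun n : ℕ =>
        ‖(a (n + 2) * z ^ ((μ * (n + 2 : ℕ) : ℝ) : ℂ))‖) ∧
      (Summable fun n : ℕ =>
        ‖((((μ * (n + 2 : ℕ)) ^ k * ϑ (n + 2) : ℝ) : ℂ) * a (n + 2) *
          z ^ ((μ * (n + 2 : ℕ) : ℝ) : ℂ))‖) ∧
      (Summable fun n : ℕ =>
        ‖((((μ * (n + 2 : ℕ)) ^ m * lam (n + 2) : ℝ) : ℂ) * a (n + 2) *
          z ^ ((μ * (n + 2 : ℕ) : ℝ) : ℂ))‖))) ∧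
    (∀ z : ℂ, ‖z‖ < 1 → z ≠ 0 →
      ‖(pser μ (fun n => (((μ * n) ^ k * ϑ n : ℝ) : ℂ) * a n) z -
          pser μ (fun n => (((μ * n) ^ m * lam n : ℝ) : ℂ) * a n) z)‖ <
      ‖((((A - B) * (1 - γ) : ℝ) : ℂ) *
            pser μ (fun n => (((μ * n) ^ m * lam n : ℝ) : ℂ) * a n) z -
          ((B : ℝ) : ℂ) *
            (pser μ (fun n => (((μ * n) ^ k * ϑ n : ℝ) : ℂ) * a n) z -
              pser μ (fun n => (((μ * n) ^ m * lam n : ℝ) : ℂ) * a n) z))‖) :=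
  stmt0_general μ A B γ k m a ϑ lam hμ hkm hBA hB0 hγ1 hlam hϑ hconv hsum hle
end

section
/- F_μ belongs to the class Ẽ if and only if the series Σ_{n=2}^∞ aₙ r^{μn} converges for every 0 ≤ r < 1 and Σ_{n=2}^∞ Ξ(n)·aₙ ≤ (A−B)(1−γ) (in particular, this sum of nonnegative terms is finite). -/
/-!
Put `P = (A−B)(1−γ)`, `Tₙ = (μn)^k ϑₙ aₙ` and `Sₙ = (μn)^m λₙ aₙ`. Then
`G − H = −Σ (Tₙ − Sₙ) z^{μn}` and `P·H − B(G − H) = P z − Σ (P Sₙ − B(Tₙ − Sₙ)) z^{μn}`, two series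
with nonnegative coefficients adding up to `Ξ(n) aₙ`. If `Σ Ξ(n) aₙ ≤ P`, the triangle inequality
and `r^{μn} ≤ r² < r` for `r = |z|` give the strict inequality. Conversely, on the real segment
`0 < r < 1` the condition forbids `Σ Ξ(n) aₙ r^{μn} = P r`; since this sum is `O(r²)` at `0`,
continuity keeps it below `P r` on all of `(0, 1)`, and letting `r → 1` bounds the partial sums
of `Σ Ξ(n) aₙ` by `P`.
-/

open Complex

/-- `Gneg μ j c a z = z − Σ_{n≥2} (μn)^j cₙ aₙ z^{μn}` (principal powers).
With `j = k, c = ϑ` this is `D_μ^k(F_μ∗Φ_μ)(z)`; with `j = m, c = λ` it is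
`D_μ^m(F_μ∗Ψ_μ)(z)`. -/
noncomputable def Gneg (μ : ℝ) (j : ℕ) (c a : ℕ → ℝ) (z : ℂ) : ℂ :=
  z - ∑' n : ℕ, (((μ * (n + 2 : ℕ)) ^ j * c (n + 2) * a (n + 2) : ℝ) : ℂ) *
    z ^ ((μ * (n + 2 : ℕ) : ℝ) : ℂ)

/-- `Fneg μ a z = z − Σ_{n≥2} aₙ z^{μn}` (principal powers). -/
noncomputable def Fneg (μ : ℝ) (a : ℕ → ℝ) (z : ℂ) : ℂ :=
  z - ∑' n : ℕ, (a (n + 2) : ℂ) * z ^ ((μ * (n + 2 : ℕ) : ℝ) : ℂ)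

/-- Membership of `F_μ(z) = z − Σ_{n≥2} aₙ z^{μn}` in the class
`Ẽ_{k,m}(Φ_μ,Ψ_μ,A,B,μ,γ)`: the series for `F_μ`, `G = D_μ^k(F_μ∗Φ_μ)` and
`H = D_μ^m(F_μ∗Ψ_μ)` converge absolutely at every `z ∈ 𝕌`, and for every
`z ∈ 𝕌 ∖ {0}` the subordination condition
`|G(z) − H(z)| < |(A−B)(1−γ)H(z) − B(G(z) − H(z))|` holds. -/
def memE (μ A B γ : ℝ) (k m : ℕ) (ϑ lam a : ℕ → ℝ) : Prop :=
  (∀ z : ℂ, (norm : ℂ → ℝ) z < 1 →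
    ((Summable fun n : ℕ =>
      (norm : ℂ → ℝ) ((a (n + 2) : ℂ) * z ^ ((μ * (n + 2 : ℕ) : ℝ) : ℂ))) ∧
    (Summable fun n : ℕ =>
      (norm : ℂ → ℝ) ((((μ * (n + 2 : ℕ)) ^ k * ϑ (n + 2) * a (n + 2) : ℝ) : ℂ) *
        z ^ ((μ * (n + 2 : ℕ) : ℝ) : ℂ))) ∧
    (Summable fun n : ℕ =>
      (norm : ℂ → ℝ) ((((μ * (n + 2 : ℕ)) ^ m * lam (n + 2) * a (n + 2) : ℝ) : ℂ) *
        z ^ ((μ * (n + 2 : ℕ) : ℝ) : ℂ))))) ∧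
  (∀ z : ℂ, (norm : ℂ → ℝ) z < 1 → z ≠ 0 →
    (norm : ℂ → ℝ) (Gneg μ k ϑ a z - Gneg μ m lam a z) <
    (norm : ℂ → ℝ) ((((A - B) * (1 - γ) : ℝ) : ℂ) * Gneg μ m lam a z -
      ((B : ℝ) : ℂ) * (Gneg μ k ϑ a z - Gneg μ m lam a z)))

open Filter Topology

noncomputable section

def rpowSeries (u e : ℕ → ℝ) (z : ℂ) : ℂ := ∑' n, (u n : ℂ) * z ^ (e n : ℂ)

theorem norm_ofReal_mul_cpow (x : ℝ) (z : ℂ) (s : ℝ) :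
    ‖(x : ℂ) * z ^ (s : ℂ)‖ = |x| * ‖z‖ ^ s := by
  rw [norm_mul, norm_real, Real.norm_eq_abs, norm_cpow_real]

section rpowSeries

variable {u v e : ℕ → ℝ} {z : ℂ}

theorem summable_norm_ofReal_mul_cpow_iff (hu : ∀ n, 0 ≤ u n) :
    Summable (fun n => ‖(u n : ℂ) * z ^ (e n : ℂ)‖) ↔ Summable fun n => u n * ‖z‖ ^ e n :=
  summable_congr fun n => by rw [norm_ofReal_mul_cpow, abs_of_nonneg (hu n)]

theorem summable_mul_rpow_of_summable (hu : ∀ n, 0 ≤ u n) (hs : Summable u)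
    (he : ∀ n, 0 ≤ e n) {r : ℝ} (hr0 : 0 ≤ r) (hr1 : r ≤ 1) :
    Summable fun n => u n * r ^ e n :=
  hs.of_nonneg_of_le (fun n => mul_nonneg (hu n) (Real.rpow_nonneg hr0 _))
    fun n => mul_le_of_le_one_right (hu n) (Real.rpow_le_one hr0 hr1 (he n))

theorem summable_norm_ofReal_mul_cpow (hu : ∀ n, 0 ≤ u n) (hs : Summable u)
    (he : ∀ n, 0 ≤ e n) (hz : ‖z‖ ≤ 1) :
    Summable fun n => ‖(u n : ℂ) * z ^ (e n : ℂ)‖ :=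
  (summable_norm_ofReal_mul_cpow_iff hu).2
    (summable_mul_rpow_of_summable hu hs he (norm_nonneg z) hz)

theorem summable_norm_ofReal_mul_ofReal_cpow_iff (hu : ∀ n, 0 ≤ u n) {r : ℝ} (hr : 0 ≤ r) :
    Summable (fun n => ‖(u n : ℂ) * (r : ℂ) ^ (e n : ℂ)‖) ↔ Summable fun n => u n * r ^ e n := by
  rw [summable_norm_ofReal_mul_cpow_iff hu, Complex.norm_of_nonneg hr]

theorem rpowSeries_ofReal {r : ℝ} (hr : 0 ≤ r) :
    rpowSeries u e r = ((∑' n, u n * r ^ e n : ℝ) : ℂ) := by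
  rw [ofReal_tsum]
  exact tsum_congr fun n => by rw [ofReal_mul, ofReal_cpow hr]

theorem rpowSeries_linear_combination (hu : Summable fun n => (u n : ℂ) * z ^ (e n : ℂ))
    (hv : Summable fun n => (v n : ℂ) * z ^ (e n : ℂ)) (α β : ℝ) :
    rpowSeries (fun n => α * u n + β * v n) e z = α * rpowSeries u e z + β * rpowSeries v e z := by
  simp only [rpowSeries, ofReal_add, ofReal_mul, add_mul, mul_assoc]
  rw [(hu.mul_left _).tsum_add (hv.mul_left _), tsum_mul_left, tsum_mul_left]

theorem norm_rpowSeries_le (hu : ∀ n, 0 ≤ u n) (hs : Summable fun n => u n * ‖z‖ ^ e n) :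
    ‖rpowSeries u e z‖ ≤ ∑' n, u n * ‖z‖ ^ e n := by
  have hnorm n : ‖(u n : ℂ) * z ^ (e n : ℂ)‖ = u n * ‖z‖ ^ e n := by
    rw [norm_ofReal_mul_cpow, abs_of_nonneg (hu n)]
  calc ‖rpowSeries u e z‖ ≤ ∑' n, ‖(u n : ℂ) * z ^ (e n : ℂ)‖ :=
        norm_tsum_le_tsum_norm (hs.congr fun n => (hnorm n).symm)
    _ = ∑' n, u n * ‖z‖ ^ e n := tsum_congr hnorm

end rpowSeries

section RealSeries

variable {X e : ℕ → ℝ} {P : ℝ}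

theorem tsum_mul_rpow_lt_s1 (he : ∀ n, 2 ≤ e n) (hP : 0 < P) (hX : ∀ n, 0 ≤ X n)
    (hXs : Summable X) (hXle : ∑' n, X n ≤ P) {r : ℝ} (hr0 : 0 < r) (hr1 : r < 1) :
    ∑' n, X n * r ^ e n < P * r := by
  have hle n : X n * r ^ e n ≤ X n * r ^ (2 : ℝ) :=
    mul_le_mul_of_nonneg_left (Real.rpow_le_rpow_of_exponent_ge hr0 hr1.le (he n)) (hX n)
  calc ∑' n, X n * r ^ e n ≤ ∑' n, X n * r ^ (2 : ℝ) :=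
        Summable.tsum_le_tsum hle
          (summable_mul_rpow_of_summable hX hXs (fun n => by linarith [he n]) hr0.le hr1.le)
          (hXs.mul_right _)
    _ = (∑' n, X n) * r ^ (2 : ℝ) := tsum_mul_right
    _ ≤ P * r ^ (2 : ℝ) := mul_le_mul_of_nonneg_right hXle (by positivity)
    _ < P * r := by
        rw [Real.rpow_two]
        exact mul_lt_mul_of_pos_left (by nlinarith) hP

theorem tsum_mul_rpow_le_sq_mul (he : ∀ n, 2 ≤ e n) (hX : ∀ n, 0 ≤ X n) {r ρ : ℝ}
    (hr0 : 0 < r) (hrρ : r ≤ ρ) (hs : Summable fun n => X n * ρ ^ e n) :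
    ∑' n, X n * r ^ e n ≤ (r / ρ) ^ 2 * ∑' n, X n * ρ ^ e n := by
  have hρ : 0 < ρ := hr0.trans_le hrρ
  have hq0 : 0 ≤ r / ρ := by positivity
  have hq1 : r / ρ ≤ 1 := (div_le_one hρ).2 hrρ
  have hle n : X n * r ^ e n ≤ (r / ρ) ^ 2 * (X n * ρ ^ e n) := by
    have hsplit : r ^ e n = ρ ^ e n * (r / ρ) ^ e n := by
      rw [← Real.mul_rpow hρ.le hq0, mul_div_cancel₀ _ hρ.ne']
    have hq : (r / ρ) ^ e n ≤ (r / ρ) ^ 2 := by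
      simpa using Real.rpow_le_rpow_of_exponent_ge' hq0 hq1 (by norm_num) (he n)
    rw [hsplit]
    have := mul_nonneg (hX n) (Real.rpow_nonneg hρ.le (e n))
    nlinarith
  have hs' : Summable fun n => X n * r ^ e n :=
    (hs.mul_left ((r / ρ) ^ 2)).of_nonneg_of_le
      (fun n => mul_nonneg (hX n) (Real.rpow_nonneg hr0.le _)) hle
  rw [← tsum_mul_left]
  exact Summable.tsum_le_tsum hle hs' (hs.mul_left _)

theorem exists_tsum_mul_rpow_lt (he : ∀ n, 2 ≤ e n) (hP : 0 < P) (hX : ∀ n, 0 ≤ X n)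
    {ρ : ℝ} (hρ : 0 < ρ) (hs : Summable fun n => X n * ρ ^ e n) :
    ∃ ε, 0 < ε ∧ ε ≤ ρ ∧ ∑' n, X n * ε ^ e n < P * ε := by
  set K := (∑' n, X n * ρ ^ e n) / ρ ^ 2
  have hK : 0 ≤ K :=
    div_nonneg (tsum_nonneg fun n => mul_nonneg (hX n) (Real.rpow_nonneg hρ.le _)) (sq_nonneg ρ)
  set ε := min ρ (P / (K + 1))
  have hε : 0 < ε := lt_min hρ (by positivity)
  have hεK : ε * K < P := calc
    ε * K ≤ P / (K + 1) * K := mul_le_mul_of_nonneg_right (min_le_right _ _) hK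
    _ < P := by rw [div_mul_eq_mul_div, div_lt_iff₀ (by positivity)]; nlinarith
  refine ⟨ε, hε, min_le_left _ _, ?_⟩
  calc ∑' n, X n * ε ^ e n ≤ (ε / ρ) ^ 2 * ∑' n, X n * ρ ^ e n :=
        tsum_mul_rpow_le_sq_mul he hX hε (min_le_left _ _) hs
    _ = ε * (ε * K) := by simp only [K]; field_simp
    _ < P * ε := by nlinarith

theorem tsum_mul_rpow_lt_of_ne (he : ∀ n, 2 ≤ e n) (hP : 0 < P) (hX : ∀ n, 0 ≤ X n)
    (hs : ∀ r, 0 < r → r < 1 → Summable fun n => X n * r ^ e n)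
    (hne : ∀ r, 0 < r → r < 1 → ∑' n, X n * r ^ e n ≠ P * r)
    {ρ : ℝ} (hρ0 : 0 < ρ) (hρ1 : ρ < 1) :
    ∑' n, X n * ρ ^ e n < P * ρ := by
  obtain ⟨ε, hε0, hερ, hεlt⟩ := exists_tsum_mul_rpow_lt he hP hX hρ0 (hs ρ hρ0 hρ1)
  have hcont : ContinuousOn (fun r => P * r - ∑' n, X n * r ^ e n) (Set.Icc ε ρ) := by
    refine (continuousOn_const.mul continuousOn_id).sub
      (continuousOn_tsum (fun n => ?_) (hs ρ hρ0 hρ1) fun n r hr => ?_)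
    · exact continuousOn_const.mul
        (continuousOn_id.rpow_const fun _ _ => Or.inr (by linarith [he n]))
    · have hr0 : 0 ≤ r := hε0.le.trans hr.1
      rw [Real.norm_of_nonneg (mul_nonneg (hX n) (Real.rpow_nonneg hr0 _))]
      exact mul_le_mul_of_nonneg_left
        (Real.rpow_le_rpow hr0 hr.2 (by linarith [he n])) (hX n)
  by_contra! hge
  obtain ⟨r, hr, hzero⟩ := intermediate_value_Icc' hερ hcont
    (show (0 : ℝ) ∈ Set.Icc _ _ from ⟨by linarith, by linarith⟩)
  exact hne r (hε0.trans_le hr.1) (hr.2.trans_lt hρ1) (by linarith [show P * r - _ = 0 from hzero])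

theorem summable_of_tsum_mul_rpow_le (hX : ∀ n, 0 ≤ X n)
    (hs : ∀ r, 0 < r → r < 1 → Summable fun n => X n * r ^ e n)
    (hle : ∀ r, 0 < r → r < 1 → ∑' n, X n * r ^ e n ≤ P) :
    Summable X ∧ ∑' n, X n ≤ P := by
  have hpartial (N : ℕ) : ∑ i ∈ Finset.range N, X i ≤ P := by
    have hlim : Tendsto (fun r : ℝ => ∑ i ∈ Finset.range N, X i * r ^ e i) (𝓝[<] 1)
        (𝓝 (∑ i ∈ Finset.range N, X i)) := by
      have hcont : ContinuousAt (fun r : ℝ => ∑ i ∈ Finset.range N, X i * r ^ e i) 1 := by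
        fun_prop (disch := norm_num)
      simpa using hcont.tendsto.mono_left nhdsWithin_le_nhds
    refine le_of_tendsto hlim ?_
    filter_upwards [Ioo_mem_nhdsLT zero_lt_one] with r hr
    exact ((hs r hr.1 hr.2).sum_le_tsum _
      fun i _ => mul_nonneg (hX i) (Real.rpow_nonneg hr.1.le _)).trans (hle r hr.1 hr.2)
  have hXs := summable_of_sum_range_le hX hpartial
  exact ⟨hXs, hXs.tsum_le_of_sum_range_le hpartial⟩

end RealSeries

theorem summable_of_summable_mul_sub_add_mul {T S : ℕ → ℝ} {α β : ℝ} (hα : 0 < α) (hβ : 0 < β)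
    (hS : ∀ n, 0 ≤ S n) (hST : ∀ n, S n ≤ T n)
    (h : Summable fun n => α * (T n - S n) + β * S n) : Summable T := by
  have hD n : 0 ≤ α * (T n - S n) := mul_nonneg hα.le (sub_nonneg.2 (hST n))
  have hS' n : 0 ≤ β * S n := mul_nonneg hβ.le (hS n)
  have hDs := h.of_nonneg_of_le hD fun n => le_add_of_nonneg_right (hS' n)
  have hSs := h.of_nonneg_of_le hS' fun n => le_add_of_nonneg_left (hD n)
  exact ((hDs.mul_left α⁻¹).add (hSs.mul_left β⁻¹)).congr fun n => by field_simp; ring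

def SubordinationCondition (P B : ℝ) (T S e : ℕ → ℝ) (z : ℂ) : Prop :=
  ‖(z - rpowSeries T e z) - (z - rpowSeries S e z)‖ <
    ‖(P : ℂ) * (z - rpowSeries S e z) -
      (B : ℂ) * ((z - rpowSeries T e z) - (z - rpowSeries S e z))‖

section Subordination

variable {T S u v e : ℕ → ℝ} {P B : ℝ} {z : ℂ}

theorem norm_rpowSeries_lt_norm_sub_rpowSeries (he : ∀ n, 2 ≤ e n) (hP : 0 < P)
    (hu : ∀ n, 0 ≤ u n) (hv : ∀ n, 0 ≤ v n) (hs : Summable fun n => u n + v n)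
    (hle : ∑' n, (u n + v n) ≤ P) (hz0 : z ≠ 0) (hz1 : ‖z‖ < 1) :
    ‖rpowSeries u e z‖ < ‖(P : ℂ) * z - rpowSeries v e z‖ := by
  have he0 n : 0 ≤ e n := by linarith [he n]
  have hr0 : 0 < ‖z‖ := norm_pos_iff.2 hz0
  have hur := summable_mul_rpow_of_summable hu
    (hs.of_nonneg_of_le hu fun n => le_add_of_nonneg_right (hv n)) he0 hr0.le hz1.le
  have hvr := summable_mul_rpow_of_summable hv
    (hs.of_nonneg_of_le hv fun n => le_add_of_nonneg_left (hu n)) he0 hr0.le hz1.le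
  have hsplit : ∑' n, (u n + v n) * ‖z‖ ^ e n =
      ∑' n, u n * ‖z‖ ^ e n + ∑' n, v n * ‖z‖ ^ e n := by
    simp only [add_mul]
    exact hur.tsum_add hvr
  have hlt := tsum_mul_rpow_lt_s1 he hP (fun n => add_nonneg (hu n) (hv n)) hs hle hr0 hz1
  have hPz : ‖(P : ℂ) * z‖ = P * ‖z‖ := by rw [norm_mul, norm_real, Real.norm_of_nonneg hP.le]
  calc ‖rpowSeries u e z‖ ≤ ∑' n, u n * ‖z‖ ^ e n := norm_rpowSeries_le hu hur
    _ < ‖(P : ℂ) * z‖ - ∑' n, v n * ‖z‖ ^ e n := by linarith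
    _ ≤ ‖(P : ℂ) * z‖ - ‖rpowSeries v e z‖ := by gcongr; exact norm_rpowSeries_le hv hvr
    _ ≤ ‖(P : ℂ) * z - rpowSeries v e z‖ := norm_sub_norm_le _ _

theorem subordinationCondition_of_tsum_le (he : ∀ n, 2 ≤ e n) (hP : 0 < P) (hB : B ≤ 0)
    (hS : ∀ n, 0 ≤ S n) (hST : ∀ n, S n ≤ T n) (hT : Summable T)
    (hX : Summable fun n => (1 - B) * (T n - S n) + P * S n)
    (hXle : ∑' n, ((1 - B) * (T n - S n) + P * S n) ≤ P) (hz0 : z ≠ 0) (hz1 : ‖z‖ < 1) :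
    SubordinationCondition P B T S e z := by
  have he0 n : 0 ≤ e n := by linarith [he n]
  have hTz := (summable_norm_ofReal_mul_cpow (fun n => (hS n).trans (hST n)) hT he0 hz1.le).of_norm
  have hSz := (summable_norm_ofReal_mul_cpow hS
    (hT.of_nonneg_of_le hS hST) he0 hz1.le).of_norm
  have hdiff : rpowSeries T e z - rpowSeries S e z = rpowSeries (fun n => T n - S n) e z := by
    rw [show (fun n => T n - S n) = fun n => 1 * T n + -1 * S n by ext; ring,
      rpowSeries_linear_combination hTz hSz]
    push_cast; ring
  have hcomb : P * rpowSeries S e z - B * (rpowSeries T e z - rpowSeries S e z) =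
      rpowSeries (fun n => P * S n - B * (T n - S n)) e z := by
    rw [show (fun n => P * S n - B * (T n - S n)) = fun n => -B * T n + (P + B) * S n by
      ext; ring, rpowSeries_linear_combination hTz hSz]
    push_cast; ring
  have hlt := norm_rpowSeries_lt_norm_sub_rpowSeries he hP (u := fun n => T n - S n)
    (v := fun n => P * S n - B * (T n - S n)) (fun n => sub_nonneg.2 (hST n))
    (fun n => by nlinarith [hS n, hST n]) (hX.congr fun n => by ring)
    ((tsum_congr fun n => by ring).trans_le hXle) hz0 hz1
  unfold SubordinationCondition
  rw [sub_sub_sub_cancel_left, ← neg_sub, norm_neg, hdiff,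
    show (P : ℂ) * (z - rpowSeries S e z) - B * -rpowSeries (fun n => T n - S n) e z =
      P * z - (P * rpowSeries S e z - B * (rpowSeries T e z - rpowSeries S e z)) by
      rw [hdiff]; ring, hcomb]
  exact hlt

theorem tsum_ne_of_subordinationCondition {r : ℝ} (hr : 0 ≤ r)
    (hT : Summable fun n => T n * r ^ e n) (hS : Summable fun n => S n * r ^ e n)
    (h : SubordinationCondition P B T S e r) :
    ∑' n, ((1 - B) * (T n - S n) + P * S n) * r ^ e n ≠ P * r := by
  rw [SubordinationCondition, rpowSeries_ofReal hr, rpowSeries_ofReal hr] at h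
  set g := ∑' n, T n * r ^ e n
  set s := ∑' n, S n * r ^ e n
  have hsum : HasSum (fun n => ((1 - B) * (T n - S n) + P * S n) * r ^ e n)
      ((1 - B) * (g - s) + P * s) := by
    have hlin := ((hT.hasSum.sub hS.hasSum).mul_left (1 - B)).add (hS.hasSum.mul_left P)
    rwa [show (fun n => (1 - B) * (T n * r ^ e n - S n * r ^ e n) + P * (S n * r ^ e n)) =
      fun n => ((1 - B) * (T n - S n) + P * S n) * r ^ e n by ext n; ring] at hlin
  rw [hsum.tsum_eq]
  intro heq
  have hrhs : (P : ℂ) * (r - s) - B * ((r - g) - (r - s)) = ((g - s : ℝ) : ℂ) := by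
    have hC := congrArg (fun x : ℝ => (x : ℂ)) heq
    push_cast at hC ⊢
    linear_combination -hC
  rw [hrhs, show ((r : ℂ) - g) - (r - s) = -((g - s : ℝ) : ℂ) by push_cast; ring, norm_neg] at h
  exact h.false

theorem tsum_le_of_subordinationCondition (he : ∀ n, 2 ≤ e n) (hP : 0 < P) (hB : B ≤ 1)
    (hS : ∀ n, 0 ≤ S n) (hST : ∀ n, S n ≤ T n)
    (hs : ∀ r, 0 < r → r < 1 →
      (Summable fun n => T n * r ^ e n) ∧ Summable fun n => S n * r ^ e n)
    (hcond : ∀ r : ℝ, 0 < r → r < 1 → SubordinationCondition P B T S e r) :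
    (Summable fun n => (1 - B) * (T n - S n) + P * S n) ∧
      ∑' n, ((1 - B) * (T n - S n) + P * S n) ≤ P := by
  have hX n : 0 ≤ (1 - B) * (T n - S n) + P * S n := by
    have := sub_nonneg.2 (hST n)
    have := hS n
    positivity
  have hXs r (hr0 : 0 < r) (hr1 : r < 1) :
      Summable fun n => ((1 - B) * (T n - S n) + P * S n) * r ^ e n := by
    obtain ⟨hT, hS⟩ := hs r hr0 hr1
    exact (((hT.sub hS).mul_left (1 - B)).add (hS.mul_left P)).congr fun n => by ring
  have hne r (hr0 : 0 < r) (hr1 : r < 1) :=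
    tsum_ne_of_subordinationCondition hr0.le (hs r hr0 hr1).1 (hs r hr0 hr1).2 (hcond r hr0 hr1)
  refine summable_of_tsum_mul_rpow_le hX hXs fun r hr0 hr1 => ?_
  exact (tsum_mul_rpow_lt_of_ne he hP hX hXs hne hr0 hr1).le.trans
    (mul_le_of_le_one_right hP.le hr1.le)

end Subordination

/-- Exponents `μn` and coefficients `(μn)^j cₙ aₙ`, reindexed so that index `n` stands for the
paper's `n + 2`. -/
def exponentSeq (μ : ℝ) (n : ℕ) : ℝ := μ * (n + 2 : ℕ)

def coeffSeq (μ : ℝ) (j : ℕ) (c a : ℕ → ℝ) (n : ℕ) : ℝ :=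
  (μ * (n + 2 : ℕ)) ^ j * c (n + 2) * a (n + 2)

theorem memE_iff (μ A B γ : ℝ) (k m : ℕ) (ϑ lam a : ℕ → ℝ) :
    memE μ A B γ k m ϑ lam a ↔
      (∀ z : ℂ, ‖z‖ < 1 →
        (Summable fun n => ‖(a (n + 2) : ℂ) * z ^ (exponentSeq μ n : ℂ)‖) ∧
        (Summable fun n => ‖(coeffSeq μ k ϑ a n : ℂ) * z ^ (exponentSeq μ n : ℂ)‖) ∧
        Summable fun n => ‖(coeffSeq μ m lam a n : ℂ) * z ^ (exponentSeq μ n : ℂ)‖) ∧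
      ∀ z : ℂ, ‖z‖ < 1 → z ≠ 0 → SubordinationCondition ((A - B) * (1 - γ)) B
        (coeffSeq μ k ϑ a) (coeffSeq μ m lam a) (exponentSeq μ) z :=
  Iff.rfl

theorem two_le_exponentSeq {μ : ℝ} (hμ : 1 ≤ μ) (n : ℕ) : 2 ≤ exponentSeq μ n := by
  have : (2 : ℝ) ≤ (n + 2 : ℕ) := by push_cast; linarith [n.cast_nonneg (α := ℝ)]
  unfold exponentSeq
  nlinarith

theorem Xi_mul_eq (μ A B γ : ℝ) (k m : ℕ) (ϑ lam a : ℕ → ℝ) (n : ℕ) :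
    Xi μ A B γ k m ϑ lam (n + 2) * a (n + 2) =
      (1 - B) * (coeffSeq μ k ϑ a n - coeffSeq μ m lam a n) +
        (A - B) * (1 - γ) * coeffSeq μ m lam a n := by
  simp only [Xi, coeffSeq]
  ring

theorem coeffSeq_nonneg {μ : ℝ} {c a : ℕ → ℝ} (hμ : 0 ≤ μ) (hc : ∀ n, 2 ≤ n → 0 ≤ c n)
    (ha : ∀ n, 2 ≤ n → 0 ≤ a n) (j n : ℕ) : 0 ≤ coeffSeq μ j c a n := by
  have := hc (n + 2) (by omega)
  have := ha (n + 2) (by omega)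
  unfold coeffSeq
  positivity

theorem coeffSeq_le_coeffSeq {μ : ℝ} {a ϑ lam : ℕ → ℝ} {k m : ℕ} (hμ : 1 ≤ μ) (hkm : m ≤ k)
    (ha : ∀ n, 2 ≤ n → 0 ≤ a n) (hlam : ∀ n, 2 ≤ n → 0 ≤ lam n)
    (hϑ : ∀ n, 2 ≤ n → lam n ≤ ϑ n) (n : ℕ) :
    coeffSeq μ m lam a n ≤ coeffSeq μ k ϑ a n := by
  have hbase : 1 ≤ μ * (n + 2 : ℕ) := by
    have := two_le_exponentSeq hμ n
    unfold exponentSeq at this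
    linarith
  exact mul_le_mul_of_nonneg_right
    (mul_le_mul (pow_le_pow_right₀ hbase hkm) (hϑ (n + 2) (by omega)) (hlam (n + 2) (by omega))
      (by positivity))
    (ha (n + 2) (by omega))

end

theorem stmt1_general (μ A B γ : ℝ) (k m : ℕ) (a ϑ lam : ℕ → ℝ)
    (hμ : 1 ≤ μ) (hkm : m ≤ k)
    (hBA : B < A) (hB0 : B < 0)
    (hγ1 : γ < 1)
    (ha : ∀ n, 2 ≤ n → 0 ≤ a n)
    (hlam : ∀ n, 2 ≤ n → 0 ≤ lam n) (hϑ : ∀ n, 2 ≤ n → lam n ≤ ϑ n) :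
    memE μ A B γ k m ϑ lam a ↔
      ((∀ r : ℝ, 0 ≤ r → r < 1 →
        Summable fun n : ℕ => a (n + 2) * r ^ (μ * (n + 2 : ℕ) : ℝ)) ∧
      (Summable fun n : ℕ => Xi μ A B γ k m ϑ lam (n + 2) * a (n + 2)) ∧
      (∑' n : ℕ, Xi μ A B γ k m ϑ lam (n + 2) * a (n + 2)) ≤ (A - B) * (1 - γ)) := by
  have hP : 0 < (A - B) * (1 - γ) := mul_pos (sub_pos.2 hBA) (sub_pos.2 hγ1)
  have he := two_le_exponentSeq hμ
  have he0 n : 0 ≤ exponentSeq μ n := by linarith [he n]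
  have ha' n : 0 ≤ a (n + 2) := ha (n + 2) (by omega)
  have hS := coeffSeq_nonneg (zero_le_one.trans hμ) hlam ha m
  have hST := coeffSeq_le_coeffSeq hμ hkm ha hlam hϑ
  have hT n := (hS n).trans (hST n)
  simp only [memE_iff, Xi_mul_eq]
  constructor
  · rintro ⟨hsum, hcond⟩
    have hsumr (r : ℝ) (hr0 : 0 ≤ r) (hr1 : r < 1) :=
      hsum (r : ℂ) (by rwa [Complex.norm_of_nonneg hr0])
    have hTSr r (hr0 : 0 < r) (hr1 : r < 1) :
        (Summable fun n => coeffSeq μ k ϑ a n * r ^ exponentSeq μ n) ∧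
          Summable fun n => coeffSeq μ m lam a n * r ^ exponentSeq μ n :=
      ⟨(summable_norm_ofReal_mul_ofReal_cpow_iff hT hr0.le).1 (hsumr r hr0.le hr1).2.1,
        (summable_norm_ofReal_mul_ofReal_cpow_iff hS hr0.le).1 (hsumr r hr0.le hr1).2.2⟩
    exact ⟨fun r hr0 hr1 =>
        (summable_norm_ofReal_mul_ofReal_cpow_iff ha' hr0).1 (hsumr r hr0 hr1).1,
      tsum_le_of_subordinationCondition he hP (by linarith) hS hST hTSr fun r hr0 hr1 =>
        hcond r (by rwa [Complex.norm_of_nonneg hr0.le]) (by exact_mod_cast hr0.ne')⟩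
  · rintro ⟨haSum, hXs, hXle⟩
    have hTs := summable_of_summable_mul_sub_add_mul (by linarith) hP hS hST hXs
    refine ⟨fun z hz => ⟨?_, summable_norm_ofReal_mul_cpow hT hTs he0 hz.le,
        summable_norm_ofReal_mul_cpow hS (hTs.of_nonneg_of_le hS hST) he0 hz.le⟩,
      fun z hz hz0 => subordinationCondition_of_tsum_le he hP hB0.le hS hST hTs hXs hXle hz0 hz⟩
    exact (summable_norm_ofReal_mul_cpow_iff ha').2 (haSum _ (norm_nonneg z) hz)

/-- Theorem 2.2 of the paper: `F_μ ∈ Ẽ_{k,m}(Φ_μ,Ψ_μ,A,B,μ,γ)` if and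
only if `Σ_{n≥2} aₙ r^{μn}` converges for every `0 ≤ r < 1` and
`Σ_{n≥2} Ξ(n) aₙ ≤ (A−B)(1−γ)` (in particular this sum of nonnegative terms is finite). -/
theorem stmt1 (μ A B γ : ℝ) (k m : ℕ) (a ϑ lam : ℕ → ℝ)
    (hμ : 1 ≤ μ) (hkm : m ≤ k)
    (hB : -1 ≤ B) (hBA : B < A) (hA : A ≤ 1) (hB0 : B < 0)
    (hγ0 : 0 ≤ γ) (hγ1 : γ < 1)
    (ha : ∀ n, 2 ≤ n → 0 ≤ a n)
    (hlam : ∀ n, 2 ≤ n → 0 ≤ lam n) (hϑ : ∀ n, 2 ≤ n → lam n ≤ ϑ n) :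
    memE μ A B γ k m ϑ lam a ↔
      ((∀ r : ℝ, 0 ≤ r → r < 1 →
        Summable fun n : ℕ => a (n + 2) * r ^ (μ * (n + 2 : ℕ) : ℝ)) ∧
      (Summable fun n : ℕ => Xi μ A B γ k m ϑ lam (n + 2) * a (n + 2)) ∧
      (∑' n : ℕ, Xi μ A B γ k m ϑ lam (n + 2) * a (n + 2)) ≤ (A - B) * (1 - γ)) :=
  stmt1_general μ A B γ k m a ϑ lam hμ hkm hBA hB0 hγ1 ha hlam hϑ
end

section
/- Assume Σ_{n=2}^∞ Ξ(n)·aₙ ≤ (A−B)(1−γ), that Ξ(2) > 0, and that Ξ(n) ≥ Ξ(2) for all n ≥ 2. Set K = (A−B)(1−γ)/Ξ(2). Then for every z ∈ 𝕌, |z| − K·|z|^{2μ} ≤ |F_μ(z)| ≤ |z| + K·|z|^{2μ}. -/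
open Complex

/-- Termwise derivative series `F_μ′(z) = 1 − Σ_{n≥2} μn·aₙ z^{μn−1}`. -/
noncomputable def Fder (μ : ℝ) (a : ℕ → ℝ) (z : ℂ) : ℂ :=
  1 - ∑' n : ℕ, ((μ * (n + 2 : ℕ) * a (n + 2) : ℝ) : ℂ) *
    z ^ ((μ * (n + 2 : ℕ) - 1 : ℝ) : ℂ)

/-!
Since every weight satisfies `Ξ(n) ≥ Ξ(2) > 0`, the coefficient condition gives
`Σ aₙ ≤ Σ Ξ(n) aₙ / Ξ(2) ≤ K`. On the unit disc `|z^{μn}| = |z|^{μn} ≤ |z|^{2μ}` for `n ≥ 2`,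
so the series part of `F_μ(z)` has modulus at most `K |z|^{2μ}`, and both bounds follow from
the triangle inequality.
-/

section WeightedSums

variable {ι : Type*} {w a : ι → ℝ} {c : ℝ}

theorem summable_of_summable_mul_of_le (hc : 0 < c) (hw : ∀ i, c ≤ w i)
    (ha : ∀ i, 0 ≤ a i) (hs : Summable fun i => w i * a i) : Summable a := by
  refine (hs.div_const c).of_nonneg_of_le ha fun i => ?_
  rw [le_div_iff₀ hc]
  nlinarith [hw i, ha i]

theorem tsum_le_tsum_mul_div_of_le (hc : 0 < c) (hw : ∀ i, c ≤ w i)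
    (ha : ∀ i, 0 ≤ a i) (hs : Summable fun i => w i * a i) :
    ∑' i, a i ≤ (∑' i, w i * a i) / c := by
  rw [← tsum_div_const]
  refine (summable_of_summable_mul_of_le hc hw ha hs).tsum_le_tsum (fun i => ?_) (hs.div_const c)
  rw [le_div_iff₀ hc]
  nlinarith [hw i, ha i]

end WeightedSums

theorem norm_tsum_mul_cpow_le {ι : Type*} {a e : ι → ℝ} {s : ℝ} {z : ℂ} (hz : ‖z‖ ≤ 1)
    (hs : 0 ≤ s) (he : ∀ i, s ≤ e i) (ha : ∀ i, 0 ≤ a i) (has : Summable a) :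
    ‖∑' i, (a i : ℂ) * z ^ (e i : ℂ)‖ ≤ (∑' i, a i) * ‖z‖ ^ s := by
  have hterm : ∀ i, ‖(a i : ℂ) * z ^ (e i : ℂ)‖ ≤ a i * ‖z‖ ^ s := fun i => by
    rw [norm_mul, norm_cpow_real, norm_real, Real.norm_of_nonneg (ha i)]
    exact mul_le_mul_of_nonneg_left
      (Real.rpow_le_rpow_of_exponent_ge' (norm_nonneg z) hz hs (he i)) (ha i)
  have hbound : Summable fun i => a i * ‖z‖ ^ s := has.mul_right _
  calc ‖∑' i, (a i : ℂ) * z ^ (e i : ℂ)‖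
      ≤ ∑' i, ‖(a i : ℂ) * z ^ (e i : ℂ)‖ :=
        norm_tsum_le_tsum_norm (hbound.of_nonneg_of_le (fun _ => norm_nonneg _) hterm)
    _ ≤ ∑' i, a i * ‖z‖ ^ s :=
        (hbound.of_nonneg_of_le (fun _ => norm_nonneg _) hterm).tsum_le_tsum hterm hbound
    _ = (∑' i, a i) * ‖z‖ ^ s := tsum_mul_right

theorem stmt4_general (μ A B γ : ℝ) (k m : ℕ) (a ϑ lam : ℕ → ℝ)
    (hμ : 1 ≤ μ)
    (ha : ∀ n, 2 ≤ n → 0 ≤ a n)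
    (hsum : Summable fun n : ℕ => Xi μ A B γ k m ϑ lam (n + 2) * a (n + 2))
    (hle : (∑' n : ℕ, Xi μ A B γ k m ϑ lam (n + 2) * a (n + 2)) ≤ (A - B) * (1 - γ))
    (hXi2 : 0 < Xi μ A B γ k m ϑ lam 2)
    (hmono : ∀ n, 2 ≤ n → Xi μ A B γ k m ϑ lam 2 ≤ Xi μ A B γ k m ϑ lam n) :
    ∀ z : ℂ, ‖z‖ < 1 →
      ‖z‖ - (A - B) * (1 - γ) / Xi μ A B γ k m ϑ lam 2 *
          ‖z‖ ^ (2 * μ) ≤ ‖Fneg μ a z‖ ∧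
      ‖Fneg μ a z‖ ≤ ‖z‖ +
        (A - B) * (1 - γ) / Xi μ A B γ k m ϑ lam 2 * ‖z‖ ^ (2 * μ) := by
  intro z hz
  have hweight : ∀ n : ℕ, Xi μ A B γ k m ϑ lam 2 ≤ Xi μ A B γ k m ϑ lam (n + 2) :=
    fun n => hmono _ (by omega)
  have hcoeff : ∀ n : ℕ, 0 ≤ a (n + 2) := fun n => ha _ (by omega)
  have hexp : ∀ n : ℕ, 2 * μ ≤ μ * ((n + 2 : ℕ) : ℝ) := fun n => by
    push_cast
    nlinarith [(n.cast_nonneg : (0 : ℝ) ≤ n)]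
  have hcoeff_sum : ∑' n : ℕ, a (n + 2) ≤ (A - B) * (1 - γ) / Xi μ A B γ k m ϑ lam 2 :=
    (tsum_le_tsum_mul_div_of_le hXi2 hweight hcoeff hsum).trans
      (div_le_div_of_nonneg_right hle hXi2.le)
  have hseries : ‖∑' n : ℕ, (a (n + 2) : ℂ) * z ^ ((μ * (n + 2 : ℕ) : ℝ) : ℂ)‖ ≤
      (A - B) * (1 - γ) / Xi μ A B γ k m ϑ lam 2 * ‖z‖ ^ (2 * μ) :=
    (norm_tsum_mul_cpow_le hz.le (by positivity) hexp hcoeff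
        (summable_of_summable_mul_of_le hXi2 hweight hcoeff hsum)).trans
      (mul_le_mul_of_nonneg_right hcoeff_sum (by positivity))
  unfold Fneg
  set T := ∑' n : ℕ, (a (n + 2) : ℂ) * z ^ ((μ * (n + 2 : ℕ) : ℝ) : ℂ)
  exact ⟨by linarith [norm_sub_norm_le z T], by linarith [norm_sub_le z T]⟩

/-- distortion theorem, Theorem 2.3 of the paper: if
`Σ_{n≥2} Ξ(n)aₙ ≤ (A−B)(1−γ)`, `Ξ(2) > 0` and `Ξ(n) ≥ Ξ(2)` for all `n ≥ 2`, then with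
`K = (A−B)(1−γ)/Ξ(2)` we have `|z| − K|z|^{2μ} ≤ |F_μ(z)| ≤ |z| + K|z|^{2μ}` on 𝕌. -/
theorem stmt4 (μ A B γ : ℝ) (k m : ℕ) (a ϑ lam : ℕ → ℝ)
    (hμ : 1 ≤ μ) (hkm : m ≤ k)
    (hB : -1 ≤ B) (hBA : B < A) (hA : A ≤ 1) (hB0 : B < 0)
    (hγ0 : 0 ≤ γ) (hγ1 : γ < 1)
    (ha : ∀ n, 2 ≤ n → 0 ≤ a n)
    (hlam : ∀ n, 2 ≤ n → 0 ≤ lam n) (hϑ : ∀ n, 2 ≤ n → lam n ≤ ϑ n)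
    (hsum : Summable fun n : ℕ => Xi μ A B γ k m ϑ lam (n + 2) * a (n + 2))
    (hle : (∑' n : ℕ, Xi μ A B γ k m ϑ lam (n + 2) * a (n + 2)) ≤ (A - B) * (1 - γ))
    (hXi2 : 0 < Xi μ A B γ k m ϑ lam 2)
    (hmono : ∀ n, 2 ≤ n → Xi μ A B γ k m ϑ lam 2 ≤ Xi μ A B γ k m ϑ lam n) :
    ∀ z : ℂ, ‖z‖ < 1 →
      ‖z‖ - (A - B) * (1 - γ) / Xi μ A B γ k m ϑ lam 2 *
          ‖z‖ ^ (2 * μ) ≤ ‖Fneg μ a z‖ ∧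
      ‖Fneg μ a z‖ ≤ ‖z‖ +
        (A - B) * (1 - γ) / Xi μ A B γ k m ϑ lam 2 * ‖z‖ ^ (2 * μ) :=
  stmt4_general μ A B γ k m a ϑ lam hμ ha hsum hle hXi2 hmono
end

section
/- Assume Σ_{n=2}^∞ Ξ(n)·aₙ ≤ (A−B)(1−γ), that Ξ(2) > 0, and that Ξ(n)/(μn) ≥ Ξ(2)/(2μ) for all n ≥ 2. Set K = 2μ(A−B)(1−γ)/Ξ(2). Then for every z ∈ 𝕌, 1 − K·|z|^{2μ−1} ≤ |F_μ′(z)| ≤ 1 + K·|z|^{2μ−1}, where F_μ′(z) = 1 − Σ_{n=2}^∞ μn·aₙ z^{μn−1} is the termwise derivative series of F_μ (which converges absolutely on 𝕌 under these hypotheses). -/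
/-!
For `n ≥ 2` the monotonicity hypothesis reads `μn ≤ (2μ/Ξ(2)) Ξ(n)`, and on the unit disc
`|z|^(μn-1) ≤ |z|^(2μ-1)` because `μn - 1 ≥ 2μ - 1 ≥ 0`. Hence the `n`-th term of the derivative
series is bounded by `(2μ/Ξ(2)) |z|^(2μ-1) Ξ(n) aₙ`, so the series converges absolutely with sum of
norm at most `K |z|^(2μ-1)` by the coefficient inequality, and the triangle inequality for
`1 - Σ` gives both bounds.
-/

open Complex

theorem norm_one_sub_bounds_of_norm_le {E : Type*} [SeminormedRing E] [NormOneClass E]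
    {s : E} {C : ℝ} (h : ‖s‖ ≤ C) : 1 - C ≤ ‖1 - s‖ ∧ ‖1 - s‖ ≤ 1 + C := by
  have hlower : ‖(1 : E)‖ - ‖s‖ ≤ ‖1 - s‖ := norm_sub_norm_le 1 s
  have hupper : ‖1 - s‖ ≤ ‖(1 : E)‖ + ‖s‖ := norm_sub_le 1 s
  rw [norm_one] at hlower hupper
  constructor <;> linarith

theorem le_div_mul_of_div_le_div {p q x c : ℝ} (hp : 0 < p) (hq : 0 < q) (hc : 0 < c)
    (h : p / q ≤ x / c) : c ≤ q / p * x := by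
  rw [div_le_div_iff₀ hq hc] at h
  rw [div_mul_eq_mul_div, le_div_iff₀ hp]
  linarith

namespace Fder

/-- Indexed from `0`: `term μ a z n` is the term of index `n + 2` of `F_μ′`. -/
noncomputable def term (μ : ℝ) (a : ℕ → ℝ) (z : ℂ) (n : ℕ) : ℂ :=
  ((μ * (n + 2 : ℕ) * a (n + 2) : ℝ) : ℂ) * z ^ ((μ * (n + 2 : ℕ) - 1 : ℝ) : ℂ)

theorem eq_one_sub_tsum_term (μ : ℝ) (a : ℕ → ℝ) (z : ℂ) :
    Fder μ a z = 1 - ∑' n, term μ a z n := rfl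

variable {μ : ℝ} {a : ℕ → ℝ} {z : ℂ}

theorem norm_term_le (hμ : 1 / 2 ≤ μ) (hz : ‖z‖ ≤ 1) {n : ℕ} (ha : 0 ≤ a (n + 2)) :
    ‖term μ a z n‖ ≤ μ * (n + 2 : ℕ) * a (n + 2) * ‖z‖ ^ (2 * μ - 1) := by
  have hcoeff : 0 ≤ μ * (n + 2 : ℕ) * a (n + 2) := by
    have : 0 ≤ μ := by linarith
    positivity
  rw [term, norm_mul, norm_real, Real.norm_of_nonneg hcoeff, norm_cpow_real]
  refine mul_le_mul_of_nonneg_left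
    (Real.rpow_le_rpow_of_exponent_ge' (norm_nonneg z) hz (by linarith) ?_) hcoeff
  have : (2 : ℝ) ≤ (n + 2 : ℕ) := by exact_mod_cast Nat.le_add_left 2 n
  nlinarith

end Fder

theorem stmt5_general (μ A B γ : ℝ) (k m : ℕ) (a ϑ lam : ℕ → ℝ)
    (hμ : 1 ≤ μ)
    (ha : ∀ n, 2 ≤ n → 0 ≤ a n)
    (hsum : Summable fun n : ℕ => Xi μ A B γ k m ϑ lam (n + 2) * a (n + 2))
    (hle : (∑' n : ℕ, Xi μ A B γ k m ϑ lam (n + 2) * a (n + 2)) ≤ (A - B) * (1 - γ))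
    (hXi2 : 0 < Xi μ A B γ k m ϑ lam 2)
    (hmono : ∀ n, 2 ≤ n →
      Xi μ A B γ k m ϑ lam 2 / (2 * μ) ≤ Xi μ A B γ k m ϑ lam n / (μ * n)) :
    ∀ z : ℂ, ‖z‖ < 1 →
      (Summable fun n : ℕ =>
        ‖(((μ * (n + 2 : ℕ) * a (n + 2) : ℝ) : ℂ) *
          z ^ ((μ * (n + 2 : ℕ) - 1 : ℝ) : ℂ))‖) ∧
      1 - 2 * μ * ((A - B) * (1 - γ)) / Xi μ A B γ k m ϑ lam 2 *
          ‖z‖ ^ (2 * μ - 1) ≤ ‖Fder μ a z‖ ∧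
      ‖Fder μ a z‖ ≤ 1 +
        2 * μ * ((A - B) * (1 - γ)) / Xi μ A B γ k m ϑ lam 2 *
          ‖z‖ ^ (2 * μ - 1) := by
  intro z hz
  set Ξ := Xi μ A B γ k m ϑ lam
  set r := ‖z‖ ^ (2 * μ - 1)
  have hμ0 : 0 < μ := by linarith
  have hterm (n : ℕ) : ‖Fder.term μ a z n‖ ≤ 2 * μ / Ξ 2 * (Ξ (n + 2) * a (n + 2)) * r := by
    have han : 0 ≤ a (n + 2) := ha (n + 2) (Nat.le_add_left 2 n)
    have hcoeff : μ * (n + 2 : ℕ) ≤ 2 * μ / Ξ 2 * Ξ (n + 2) :=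
      le_div_mul_of_div_le_div hXi2 (by positivity) (by positivity)
        (hmono (n + 2) (Nat.le_add_left 2 n))
    calc ‖Fder.term μ a z n‖ ≤ μ * (n + 2 : ℕ) * a (n + 2) * r :=
          Fder.norm_term_le (by linarith) hz.le han
      _ ≤ 2 * μ / Ξ 2 * Ξ (n + 2) * a (n + 2) * r := by gcongr
      _ = 2 * μ / Ξ 2 * (Ξ (n + 2) * a (n + 2)) * r := by ring
  have hmajorant := (hsum.mul_left (2 * μ / Ξ 2)).mul_right r
  refine ⟨hmajorant.of_nonneg_of_le (fun _ => norm_nonneg _) hterm,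
    Fder.eq_one_sub_tsum_term μ a z ▸ norm_one_sub_bounds_of_norm_le ?_⟩
  calc ‖∑' n, Fder.term μ a z n‖
      ≤ ∑' n, 2 * μ / Ξ 2 * (Ξ (n + 2) * a (n + 2)) * r :=
        tsum_of_norm_bounded hmajorant.hasSum hterm
    _ = 2 * μ / Ξ 2 * (∑' n, Ξ (n + 2) * a (n + 2)) * r := by
        rw [tsum_mul_right, tsum_mul_left]
    _ ≤ 2 * μ / Ξ 2 * ((A - B) * (1 - γ)) * r := by gcongr
    _ = 2 * μ * ((A - B) * (1 - γ)) / Ξ 2 * r := by ring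

/-- distortion theorem for the derivative, Theorem 2.4 of the paper: if
`Σ_{n≥2} Ξ(n)aₙ ≤ (A−B)(1−γ)`, `Ξ(2) > 0` and `Ξ(n)/(μn) ≥ Ξ(2)/(2μ)` for all `n ≥ 2`,
then with `K = 2μ(A−B)(1−γ)/Ξ(2)` the termwise derivative series
`F_μ′(z) = 1 − Σ_{n≥2} μn·aₙ z^{μn−1}` converges absolutely on 𝕌 and satisfies
`1 − K|z|^{2μ−1} ≤ |F_μ′(z)| ≤ 1 + K|z|^{2μ−1}` on 𝕌. -/
theorem stmt5 (μ A B γ : ℝ) (k m : ℕ) (a ϑ lam : ℕ → ℝ)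
    (hμ : 1 ≤ μ) (hkm : m ≤ k)
    (hB : -1 ≤ B) (hBA : B < A) (hA : A ≤ 1) (hB0 : B < 0)
    (hγ0 : 0 ≤ γ) (hγ1 : γ < 1)
    (ha : ∀ n, 2 ≤ n → 0 ≤ a n)
    (hlam : ∀ n, 2 ≤ n → 0 ≤ lam n) (hϑ : ∀ n, 2 ≤ n → lam n ≤ ϑ n)
    (hsum : Summable fun n : ℕ => Xi μ A B γ k m ϑ lam (n + 2) * a (n + 2))
    (hle : (∑' n : ℕ, Xi μ A B γ k m ϑ lam (n + 2) * a (n + 2)) ≤ (A - B) * (1 - γ))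
    (hXi2 : 0 < Xi μ A B γ k m ϑ lam 2)
    (hmono : ∀ n, 2 ≤ n →
      Xi μ A B γ k m ϑ lam 2 / (2 * μ) ≤ Xi μ A B γ k m ϑ lam n / (μ * n)) :
    ∀ z : ℂ, ‖z‖ < 1 →
      (Summable fun n : ℕ =>
        ‖(((μ * (n + 2 : ℕ) * a (n + 2) : ℝ) : ℂ) *
          z ^ ((μ * (n + 2 : ℕ) - 1 : ℝ) : ℂ))‖) ∧
      1 - 2 * μ * ((A - B) * (1 - γ)) / Xi μ A B γ k m ϑ lam 2 *
          ‖z‖ ^ (2 * μ - 1) ≤ ‖Fder μ a z‖ ∧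
      ‖Fder μ a z‖ ≤ 1 +
        2 * μ * ((A - B) * (1 - γ)) / Xi μ A B γ k m ϑ lam 2 *
          ‖z‖ ^ (2 * μ - 1) :=
  stmt5_general μ A B γ k m a ϑ lam hμ ha hsum hle hXi2 hmono
end

section
/- Assume Σ_{n=2}^∞ Ξ(n)·aₙ ≤ (A−B)(1−γ), and let r₂ = inf_{n≥2} [ (Ξ(n)/((A−B)(1−γ))) · (1−ψ)/(μn(μn−ψ)) ]^{1/(μn−1)}. Then F_μ is convex of order ψ in |z| < r₂: for every z ∈ 𝕌* with 0 < |z| < r₂ one has F_μ′(z) ≠ 0 and Re( 1 + z·F_μ″(z) / F_μ′(z) ) > ψ. -/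
open Complex

/-- Termwise second derivative of `Fneg`. -/
noncomputable def Fder2 (μ : ℝ) (a : ℕ → ℝ) (z : ℂ) : ℂ :=
  - ∑' n : ℕ, ((μ * (n + 2 : ℕ) * (μ * (n + 2 : ℕ) - 1) * a (n + 2) : ℝ) : ℂ) *
    z ^ ((μ * (n + 2 : ℕ) - 2 : ℝ) : ℂ)

lemma Xi_nonneg {μ A B γ : ℝ} {k m : ℕ} {ϑ lam : ℕ → ℝ} {n : ℕ} (hμn : 1 ≤ μ * n)
    (hkm : m ≤ k) (hB : B ≤ 1) (hD : 0 ≤ (A - B) * (1 - γ)) (hlam : 0 ≤ lam n)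
    (hϑ : lam n ≤ ϑ n) : 0 ≤ Xi μ A B γ k m ϑ lam n := by
  have hμn₀ : 0 ≤ μ * n := by linarith
  have hpow : (μ * n) ^ m * lam n ≤ (μ * n) ^ k * ϑ n :=
    mul_le_mul (pow_le_pow_right₀ hμn hkm) hϑ hlam (pow_nonneg hμn₀ k)
  have h₁ := mul_nonneg (sub_nonneg.2 hB) (sub_nonneg.2 hpow)
  have h₂ := mul_nonneg hD (mul_nonneg (pow_nonneg hμn₀ m) hlam)
  unfold Xi
  linarith

lemma Real.lt_of_lt_iInf {ι : Type*} {f : ι → ℝ} {r : ℝ} (hr : 0 ≤ r) (h : r < ⨅ i, f i)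
    (i : ι) : r < f i := by
  by_cases hf : BddBelow (Set.range f)
  · exact h.trans_le (ciInf_le hf i)
  · -- an infimum that is not bounded below is `0` in `ℝ`
    rw [Real.iInf_of_not_bddBelow hf] at h
    linarith

lemma mul_rpow_lt_of_lt_rpow_one_div {N X D ψ r : ℝ} (hN : 1 < N) (hψ : ψ < 1) (hX : 0 ≤ X)
    (hD : 0 < D) (hr : 0 ≤ r)
    (h : r < (X / D * ((1 - ψ) / (N * (N - ψ)))) ^ (1 / (N - 1))) :
    N * (N - ψ) * r ^ (N - 1) < X * (1 - ψ) / D := by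
  have hNψ₀ : 0 < N - ψ := by linarith
  have hNψ : 0 < N * (N - ψ) := mul_pos (by linarith) hNψ₀
  have hbase : 0 ≤ X / D * ((1 - ψ) / (N * (N - ψ))) :=
    mul_nonneg (div_nonneg hX hD.le) (div_nonneg (by linarith) hNψ.le)
  rw [one_div, Real.lt_rpow_inv_iff_of_pos hr hbase (by linarith)] at h
  calc N * (N - ψ) * r ^ (N - 1) < N * (N - ψ) * (X / D * ((1 - ψ) / (N * (N - ψ)))) :=
        mul_lt_mul_of_pos_left h hNψ
    _ = X * (1 - ψ) / D := by field_simp [hNψ₀.ne']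

lemma tsum_mul_lt_of_forall_lt {c α β : ℕ → ℝ} {M : ℝ} (hc : ∀ n, 0 ≤ c n)
    (hα : ∀ n, 0 ≤ α n) (hαβ : ∀ n, α n < β n) (hβ : Summable fun n => c n * β n)
    (hM : ∑' n, c n * β n ≤ M) (hM0 : 0 < M) :
    (Summable fun n => c n * α n) ∧ ∑' n, c n * α n < M := by
  have hle : ∀ n, c n * α n ≤ c n * β n := fun n => mul_le_mul_of_nonneg_left (hαβ n).le (hc n)
  have hnn : ∀ n, 0 ≤ c n * α n := fun n => mul_nonneg (hc n) (hα n)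
  refine ⟨hβ.of_nonneg_of_le hnn hle, ?_⟩
  by_cases hzero : ∀ n, c n = 0
  · simpa [hzero] using hM0
  · obtain ⟨i, hi⟩ := not_forall.1 hzero
    have hlt := Summable.tsum_lt_tsum_of_nonneg hnn hle
      (mul_lt_mul_of_pos_left (hαβ i) ((hc i).lt_of_ne' hi)) hβ
    linarith

lemma ne_zero_and_lt_re_one_add_div {F Q : ℂ} {s t ψ : ℝ} (hF : ‖1 - F‖ ≤ s) (hQ : ‖Q‖ ≤ t)
    (hψ : ψ < 1) (h : t + (1 - ψ) * s < 1 - ψ) : F ≠ 0 ∧ ψ < (1 + Q / F).re := by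
  have hs : s < 1 := by
    have : (1 - ψ) * s < (1 - ψ) * 1 := by linarith [(norm_nonneg Q).trans hQ]
    exact lt_of_mul_lt_mul_left this (by linarith)
  have hlow : 1 - s ≤ ‖F‖ := by
    have := norm_sub_norm_le (1 : ℂ) (1 - F)
    rw [norm_one, sub_sub_cancel] at this
    linarith
  have hpos : 0 < ‖F‖ := by linarith
  refine ⟨norm_pos_iff.1 hpos, ?_⟩
  have hw : ‖Q / F‖ < 1 - ψ := by
    rw [norm_div, div_lt_iff₀ hpos]
    calc ‖Q‖ ≤ t := hQ
      _ < (1 - ψ) * (1 - s) := by linarith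
      _ ≤ (1 - ψ) * ‖F‖ := mul_le_mul_of_nonneg_left hlow (by linarith)
  have hre := neg_le_of_abs_le (abs_re_le_norm (Q / F))
  rw [add_re, one_re]
  linarith

lemma norm_tsum_ofReal_mul_cpow_le {c e : ℕ → ℝ} {z : ℂ} (hc : ∀ n, 0 ≤ c n)
    (hs : Summable fun n => c n * ‖z‖ ^ e n) :
    ‖∑' n, (c n : ℂ) * z ^ (e n : ℂ)‖ ≤ ∑' n, c n * ‖z‖ ^ e n := by
  have hnorm : ∀ n, ‖(c n : ℂ) * z ^ (e n : ℂ)‖ = c n * ‖z‖ ^ e n := fun n => by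
    rw [norm_mul, norm_real, Real.norm_of_nonneg (hc n), norm_cpow_real]
  calc ‖∑' n, (c n : ℂ) * z ^ (e n : ℂ)‖ ≤ ∑' n, ‖(c n : ℂ) * z ^ (e n : ℂ)‖ :=
        norm_tsum_le_tsum_norm ((summable_congr hnorm).2 hs)
    _ = ∑' n, c n * ‖z‖ ^ e n := tsum_congr hnorm

lemma norm_mul_tsum_ofReal_mul_cpow_le {c e : ℕ → ℝ} {z : ℂ} (hz : z ≠ 0) (hc : ∀ n, 0 ≤ c n)
    (hs : Summable fun n => c n * ‖z‖ ^ (e n + 1)) :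
    ‖z * ∑' n, (c n : ℂ) * z ^ (e n : ℂ)‖ ≤ ∑' n, c n * ‖z‖ ^ (e n + 1) := by
  have hr : 0 < ‖z‖ := norm_pos_iff.2 hz
  have hshift : ∀ n, c n * ‖z‖ ^ (e n + 1) = ‖z‖ * (c n * ‖z‖ ^ e n) := fun n => by
    rw [Real.rpow_add_one hr.ne']
    ring
  simp only [hshift] at hs ⊢
  rw [norm_mul, tsum_mul_left]
  exact mul_le_mul_of_nonneg_left
    (norm_tsum_ofReal_mul_cpow_le hc ((summable_mul_left_iff hr.ne').1 hs)) hr.le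

section Convexity

variable {μ ψ : ℝ} {a : ℕ → ℝ} {z : ℂ}

lemma norm_one_sub_Fder_le (hμ : ∀ n : ℕ, 0 ≤ μ * (n + 2 : ℕ)) (ha : ∀ n, 0 ≤ a (n + 2))
    (hs : Summable fun n : ℕ => μ * (n + 2 : ℕ) * a (n + 2) * ‖z‖ ^ (μ * (n + 2 : ℕ) - 1)) :
    ‖1 - Fder μ a z‖ ≤ ∑' n : ℕ, μ * (n + 2 : ℕ) * a (n + 2) * ‖z‖ ^ (μ * (n + 2 : ℕ) - 1) := by
  rw [Fder, sub_sub_cancel]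
  exact norm_tsum_ofReal_mul_cpow_le (fun n => mul_nonneg (hμ n) (ha n)) hs

lemma norm_mul_Fder2_le (hμ : ∀ n : ℕ, 1 ≤ μ * (n + 2 : ℕ)) (ha : ∀ n, 0 ≤ a (n + 2))
    (hz : z ≠ 0)
    (hs : Summable fun n : ℕ =>
      μ * (n + 2 : ℕ) * (μ * (n + 2 : ℕ) - 1) * a (n + 2) * ‖z‖ ^ (μ * (n + 2 : ℕ) - 1)) :
    ‖z * Fder2 μ a z‖ ≤ ∑' n : ℕ,
      μ * (n + 2 : ℕ) * (μ * (n + 2 : ℕ) - 1) * a (n + 2) * ‖z‖ ^ (μ * (n + 2 : ℕ) - 1) := by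
  have hexp : ∀ n : ℕ, μ * (n + 2 : ℕ) - 2 + 1 = μ * (n + 2 : ℕ) - 1 := fun n => by ring
  have hc : ∀ n : ℕ, 0 ≤ μ * (n + 2 : ℕ) * (μ * (n + 2 : ℕ) - 1) * a (n + 2) := fun n =>
    mul_nonneg (mul_nonneg (by linarith [hμ n]) (by linarith [hμ n])) (ha n)
  rw [Fder2, mul_neg, norm_neg]
  simpa only [hexp] using norm_mul_tsum_ofReal_mul_cpow_le (e := fun n => μ * (n + 2 : ℕ) - 2)
    hz hc (by simpa only [hexp] using hs)

lemma Fder_ne_zero_and_lt_re (hμ : ∀ n : ℕ, 1 ≤ μ * (n + 2 : ℕ)) (hψ : ψ < 1)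
    (ha : ∀ n, 0 ≤ a (n + 2)) (hz : z ≠ 0)
    (hs : Summable fun n : ℕ =>
      a (n + 2) * (μ * (n + 2 : ℕ) * (μ * (n + 2 : ℕ) - ψ) * ‖z‖ ^ (μ * (n + 2 : ℕ) - 1)))
    (hlt : ∑' n : ℕ,
      a (n + 2) * (μ * (n + 2 : ℕ) * (μ * (n + 2 : ℕ) - ψ) * ‖z‖ ^ (μ * (n + 2 : ℕ) - 1)) < 1 - ψ) :
    Fder μ a z ≠ 0 ∧ ψ < (1 + z * Fder2 μ a z / Fder μ a z).re := by
  set s₁ : ℕ → ℝ := fun n => μ * (n + 2 : ℕ) * a (n + 2) * ‖z‖ ^ (μ * (n + 2 : ℕ) - 1)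
  set s₃ : ℕ → ℝ := fun n =>
    μ * (n + 2 : ℕ) * (μ * (n + 2 : ℕ) - 1) * a (n + 2) * ‖z‖ ^ (μ * (n + 2 : ℕ) - 1)
  have hs₁ : ∀ n, 0 ≤ s₁ n := fun n =>
    mul_nonneg (mul_nonneg (by linarith [hμ n]) (ha n)) (by positivity)
  have hs₃ : ∀ n, 0 ≤ s₃ n := fun n =>
    mul_nonneg (mul_nonneg (mul_nonneg (by linarith [hμ n]) (by linarith [hμ n])) (ha n))
      (by positivity)
  have hsplit : ∀ n : ℕ, a (n + 2) * (μ * (n + 2 : ℕ) * (μ * (n + 2 : ℕ) - ψ) *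
      ‖z‖ ^ (μ * (n + 2 : ℕ) - 1)) = s₃ n + (1 - ψ) * s₁ n := fun n => by ring
  replace hs := hs.congr hsplit
  rw [tsum_congr hsplit] at hlt
  have hs₃sum : Summable s₃ :=
    hs.of_nonneg_of_le hs₃ fun n => le_add_of_nonneg_right (mul_nonneg (by linarith) (hs₁ n))
  have hs₁sum : Summable s₁ := (summable_mul_left_iff (by linarith : 1 - ψ ≠ 0)).1 <|
    hs.of_nonneg_of_le (fun n => mul_nonneg (by linarith) (hs₁ n))
      fun n => le_add_of_nonneg_left (hs₃ n)
  rw [hs₃sum.tsum_add (hs₁sum.mul_left _), tsum_mul_left] at hlt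
  exact ne_zero_and_lt_re_one_add_div (norm_one_sub_Fder_le (fun n => by linarith [hμ n]) ha hs₁sum)
    (norm_mul_Fder2_le hμ ha hz hs₃sum) hψ hlt

end Convexity

theorem stmt7_general (μ A B γ ψ : ℝ) (k m : ℕ) (a ϑ lam : ℕ → ℝ)
    (hμ : 1 ≤ μ) (hkm : m ≤ k)
    (hBA : B < A) (hA : A ≤ 1)
    (hγ1 : γ < 1) (hψ1 : ψ < 1)
    (ha : ∀ n, 2 ≤ n → 0 ≤ a n)
    (hlam : ∀ n, 2 ≤ n → 0 ≤ lam n) (hϑ : ∀ n, 2 ≤ n → lam n ≤ ϑ n)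
    (hsum : Summable fun n : ℕ => Xi μ A B γ k m ϑ lam (n + 2) * a (n + 2))
    (hle : (∑' n : ℕ, Xi μ A B γ k m ϑ lam (n + 2) * a (n + 2)) ≤ (A - B) * (1 - γ)) :
    ∀ z : ℂ, ‖z‖ < 1 → (¬ ∃ x : ℝ, x ≤ 0 ∧ (x : ℂ) = z) →
      0 < ‖z‖ →
      ‖z‖ <
        (⨅ n : ℕ, (Xi μ A B γ k m ϑ lam (n + 2) / ((A - B) * (1 - γ)) *
            ((1 - ψ) / (μ * (n + 2 : ℕ) * (μ * (n + 2 : ℕ) - ψ)))) ^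
          ((1 : ℝ) / (μ * (n + 2 : ℕ) - 1))) →
      Fder μ a z ≠ 0 ∧ ψ < (1 + z * Fder2 μ a z / Fder μ a z).re := by
  intro z _ _ hz0 hzr
  set D : ℝ := (A - B) * (1 - γ)
  have hD : 0 < D := mul_pos (sub_pos.2 hBA) (sub_pos.2 hγ1)
  have hN : ∀ n : ℕ, 2 ≤ μ * (n + 2 : ℕ) := fun n => by
    have : (2 : ℝ) ≤ (n + 2 : ℕ) := by norm_cast; omega
    nlinarith
  have ha₂ : ∀ n, 0 ≤ a (n + 2) := fun n => ha _ (by omega)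
  have hXi : ∀ n, 0 ≤ Xi μ A B γ k m ϑ lam (n + 2) := fun n =>
    Xi_nonneg (by linarith [hN n]) hkm (hBA.le.trans hA) hD.le (hlam _ (by omega))
      (hϑ _ (by omega))
  have hterm : ∀ n : ℕ, μ * (n + 2 : ℕ) * (μ * (n + 2 : ℕ) - ψ) * ‖z‖ ^ (μ * (n + 2 : ℕ) - 1) <
      Xi μ A B γ k m ϑ lam (n + 2) * (1 - ψ) / D := fun n =>
    mul_rpow_lt_of_lt_rpow_one_div (by linarith [hN n]) hψ1 (hXi n) hD hz0.le
      (Real.lt_of_lt_iInf hz0.le hzr n)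
  have hcoeff : ∑' n : ℕ, a (n + 2) * (Xi μ A B γ k m ϑ lam (n + 2) * (1 - ψ) / D) ≤ 1 - ψ :=
    calc _ = (∑' n : ℕ, Xi μ A B γ k m ϑ lam (n + 2) * a (n + 2)) * ((1 - ψ) / D) := by
          rw [← tsum_mul_right]
          exact tsum_congr fun n => by ring
      _ ≤ D * ((1 - ψ) / D) := mul_le_mul_of_nonneg_right hle (div_nonneg (by linarith) hD.le)
      _ = 1 - ψ := by field_simp
  obtain ⟨hs, hlt⟩ := tsum_mul_lt_of_forall_lt ha₂
    (fun n => mul_nonneg (mul_nonneg (by linarith [hN n]) (by linarith [hN n])) (by positivity))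
    hterm ((hsum.mul_right ((1 - ψ) / D)).congr fun n => by ring) hcoeff (by linarith)
  exact Fder_ne_zero_and_lt_re (fun n => by linarith [hN n]) hψ1 ha₂ (norm_pos_iff.1 hz0) hs hlt

/-- radius of convexity: if `Σ_{n≥2} Ξ(n)aₙ ≤ (A−B)(1−γ)` then, with
`r₂ = inf_{n≥2} [(Ξ(n)/((A−B)(1−γ)))·(1−ψ)/(μn(μn−ψ))]^{1/(μn−1)}`, the function `F_μ`
is convex of order `ψ` for `0 < |z| < r₂` in the slit unit disk:
`F_μ′(z) ≠ 0` and `Re(1 + z F_μ″(z)/F_μ′(z)) > ψ`. -/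
theorem stmt7 (μ A B γ ψ : ℝ) (k m : ℕ) (a ϑ lam : ℕ → ℝ)
    (hμ : 1 ≤ μ) (hkm : m ≤ k)
    (hB : -1 ≤ B) (hBA : B < A) (hA : A ≤ 1) (hB0 : B < 0)
    (hγ0 : 0 ≤ γ) (hγ1 : γ < 1) (hψ0 : 0 ≤ ψ) (hψ1 : ψ < 1)
    (ha : ∀ n, 2 ≤ n → 0 ≤ a n)
    (hlam : ∀ n, 2 ≤ n → 0 ≤ lam n) (hϑ : ∀ n, 2 ≤ n → lam n ≤ ϑ n)
    (hsum : Summable fun n : ℕ => Xi μ A B γ k m ϑ lam (n + 2) * a (n + 2))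
    (hle : (∑' n : ℕ, Xi μ A B γ k m ϑ lam (n + 2) * a (n + 2)) ≤ (A - B) * (1 - γ)) :
    ∀ z : ℂ, ‖z‖ < 1 → (¬ ∃ x : ℝ, x ≤ 0 ∧ (x : ℂ) = z) →
      0 < ‖z‖ →
      ‖z‖ <
        (⨅ n : ℕ, (Xi μ A B γ k m ϑ lam (n + 2) / ((A - B) * (1 - γ)) *
            ((1 - ψ) / (μ * (n + 2 : ℕ) * (μ * (n + 2 : ℕ) - ψ)))) ^
          ((1 : ℝ) / (μ * (n + 2 : ℕ) - 1))) →
      Fder μ a z ≠ 0 ∧ ψ < (1 + z * Fder2 μ a z / Fder μ a z).re :=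
  stmt7_general μ A B γ ψ k m a ϑ lam hμ hkm hBA hA hγ1 hψ1 ha hlam hϑ hsum hle
end
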